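/- Let H be a Hilbert space, k > 0 a real number, and a⁺(u,v) a continuous symmetric bilinear form on H that is coercive with coercivity constant at least min(1, k²+1) with respect to a norm |||v|||² = (k²+1)‖v‖₀² + |v|₁² (where ‖·‖₀ ≤ C|·|₁ on H). Then for every bounded linear functional given by f ∈ H via v ↦ (f,v)₀, the unique solution ũ of a⁺(ũ,v) = (f,v)₀ satisfies (k²+1)‖ũ‖₀ + (k+1)|ũ|₁ ≤ C‖f‖₀ with C independent of k. -/

import Mathlib

/-!
Testing the equation with `v = ũ` gives the energy bound `|ũ|₁² + k²‖ũ‖₀² ≤ ‖f‖₀ ‖ũ‖₀`.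
Dividing by `‖ũ‖₀` controls `k²‖ũ‖₀`, and, since `2k‖ũ‖₀|ũ|₁ ≤ |ũ|₁² + k²‖ũ‖₀²`, also `k|ũ|₁`;
the Friedrichs inequality `‖ũ‖₀ ≤ C₀|ũ|₁` controls `|ũ|₁` and then `‖ũ‖₀` by `‖f‖₀` without any
factor of `k`.
-/

section EnergyBound

variable {a b F C0 k : ℝ}

theorem sq_mul_le_of_energy_le (ha : 0 ≤ a) (hF : 0 ≤ F)
    (hE : b ^ 2 + k ^ 2 * a ^ 2 ≤ F * a) : k ^ 2 * a ≤ F := by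
  rcases ha.eq_or_lt with rfl | ha
  · simpa using hF
  · exact le_of_mul_le_mul_right (by nlinarith [sq_nonneg b]) ha

theorem two_mul_mul_le_of_energy_le (ha : 0 ≤ a) (hF : 0 ≤ F)
    (hE : b ^ 2 + k ^ 2 * a ^ 2 ≤ F * a) : 2 * k * b ≤ F := by
  rcases ha.eq_or_lt with rfl | ha
  · have hb : b = 0 := pow_eq_zero_iff two_ne_zero |>.mp (by nlinarith [sq_nonneg b])
    simpa [hb] using hF
  · have hAMGM : 2 * (k * a) * b ≤ (k * a) ^ 2 + b ^ 2 := two_mul_le_add_sq _ _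
    exact le_of_mul_le_mul_right (by nlinarith) ha

theorem le_mul_of_energy_le (hb : 0 ≤ b) (hF : 0 ≤ F) (hC0 : 0 ≤ C0) (hab : a ≤ C0 * b)
    (hE : b ^ 2 + k ^ 2 * a ^ 2 ≤ F * a) : b ≤ C0 * F := by
  have hb2 : b * b ≤ b * (C0 * F) := by
    nlinarith [sq_nonneg (k * a), mul_le_mul_of_nonneg_left hab hF]
  rcases hb.eq_or_lt with rfl | hb
  · positivity
  · exact le_of_mul_le_mul_left hb2 hb

theorem stability_bound_of_energy_le (ha : 0 ≤ a) (hb : 0 ≤ b) (hF : 0 ≤ F) (hC0 : 0 ≤ C0)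
    (hab : a ≤ C0 * b) (hE : b ^ 2 + k ^ 2 * a ^ 2 ≤ F * a) :
    (k ^ 2 + 1) * a + (k + 1) * b ≤ (C0 ^ 2 + C0 + 2) * F := by
  have hka := sq_mul_le_of_energy_le ha hF hE
  have hkb := two_mul_mul_le_of_energy_le ha hF hE
  have hbF := le_mul_of_energy_le hb hF hC0 hab hE
  have haF : a ≤ C0 ^ 2 * F :=
    calc a ≤ C0 * b := hab
      _ ≤ C0 * (C0 * F) := mul_le_mul_of_nonneg_left hbF hC0
      _ = C0 ^ 2 * F := by ring
  linear_combination hka + haF + hkb / 2 + hbF + hF / 2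

end EnergyBound

theorem energy_le_of_forall_eq {H : Type*} {B0 B1 : H → H → ℝ} {k : ℝ} {f u : H}
    (hCS : ∀ u v, B0 u v ≤ Real.sqrt (B0 u u) * Real.sqrt (B0 v v))
    (hsol : ∀ v, B1 u v + k ^ 2 * B0 u v = B0 f v) :
    B1 u u + k ^ 2 * B0 u u ≤ Real.sqrt (B0 f f) * Real.sqrt (B0 u u) :=
  hsol u ▸ hCS f u

/-- Abstract Lemma 2.3: stability of the coercive auxiliary problem
`a⁺(ũ,v) = B1 ũ v + k² B0 ũ v = (f,v)₀`, with constant independent of `k`. -/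
theorem stmt_0 (C0 : ℝ) (hC0 : 0 < C0) :
    ∃ C : ℝ, 0 < C ∧ ∀ (H : Type) (B0 B1 : H → H → ℝ),
      (∀ v, 0 ≤ B0 v v) → (∀ v, 0 ≤ B1 v v) →
      (∀ u v, B0 u v ≤ Real.sqrt (B0 u u) * Real.sqrt (B0 v v)) →
      (∀ v, Real.sqrt (B0 v v) ≤ C0 * Real.sqrt (B1 v v)) →
      ∀ (k : ℝ), 0 < k → ∀ (f utld : H),
      (∀ v, B1 utld v + k ^ 2 * B0 utld v = B0 f v) →
      (k ^ 2 + 1) * Real.sqrt (B0 utld utld) + (k + 1) * Real.sqrt (B1 utld utld)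
        ≤ C * Real.sqrt (B0 f f) := by
  refine ⟨C0 ^ 2 + C0 + 2, by positivity, ?_⟩
  intro H B0 B1 h0 h1 hCS hFriedrichs k _ f u hsol
  have hE : Real.sqrt (B1 u u) ^ 2 + k ^ 2 * Real.sqrt (B0 u u) ^ 2
      ≤ Real.sqrt (B0 f f) * Real.sqrt (B0 u u) := by
    rw [Real.sq_sqrt (h0 u), Real.sq_sqrt (h1 u)]
    exact energy_le_of_forall_eq hCS hsol
  exact stability_bound_of_energy_le (Real.sqrt_nonneg _) (Real.sqrt_nonneg _)
    (Real.sqrt_nonneg _) hC0.le (hFriedrichs u) hE
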